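/- arXiv:2605.27248 — 2 statements merged into one kernel-verified Lean document; each statement's English description precedes it below -/
import Mathlib

section
/- For any n-run OofA design D on m components with n ≥ 2, the first centralized generalized wordlength quantity satisfies C_1(D) = q − (2(n−1)/n) k_ave(D), where q = m(m−1)/2. -/
/-- A run (addition order) on `m` components: position `r` receives component `x r`.
The position map `π_x` is `x.symm`. -/
abbrev Run (m : ℕ) := Equiv.Perm (Fin m)

/-- Kendall tau distance between two runs. -/
def kendall {m : ℕ} (x y : Run m) : ℕ :=
  (Finset.univ.filter fun p : Fin m × Fin m =>
    p.1 < p.2 ∧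
      (((x.symm p.1 : ℕ) : ℤ) - ((x.symm p.2 : ℕ) : ℤ)) *
        (((y.symm p.1 : ℕ) : ℤ) - ((y.symm p.2 : ℕ) : ℤ)) < 0).card

/-- Average pairwise Kendall tau distance of an `n`-run design. -/
noncomputable def kave {m n : ℕ} (D : Fin n → Run m) : ℝ :=
  (∑ p ∈ Finset.univ.filter (fun p : Fin n × Fin n => p.1 < p.2),
      (kendall (D p.1) (D p.2) : ℝ)) / (n.choose 2 : ℝ)

/-- Second moment of the pairwise Kendall tau distances of an `n`-run design. -/
noncomputable def km2 {m n : ℕ} (D : Fin n → Run m) : ℝ :=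
  (∑ p ∈ Finset.univ.filter (fun p : Fin n × Fin n => p.1 < p.2),
      (kendall (D p.1) (D p.2) : ℝ) ^ 2) / (n.choose 2 : ℝ)

/-- The PWO factor `z_ab(x)` as a real number. -/
def zab {m : ℕ} (x : Run m) (p : Fin m × Fin m) : ℝ :=
  if x.symm p.1 < x.symm p.2 then 1 else -1

/-- The set `Q` of ordered component pairs `(a,b)` with `a < b`. -/
def pairsQ (m : ℕ) : Finset (Fin m × Fin m) :=
  Finset.univ.filter fun p => p.1 < p.2

/-- The `J`-characteristic `J_W(D) = Σ_{x ∈ D} Π_{(a,b) ∈ W} z_ab(x)`. -/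
noncomputable def Jchar {m : ℕ} {ι : Type} [Fintype ι] (D : ι → Run m)
    (W : Finset (Fin m × Fin m)) : ℝ :=
  ∑ i, ∏ p ∈ W, zab (D i) p

/-- The centralized generalized wordlength pattern
`C_a(D) = Σ_{W ⊆ Q, |W| = a} (J_W(D)/n − J_W(D_full)/m!)²`,
where the full design consists of all `m!` permutations. -/
noncomputable def Cwlp {m n : ℕ} (D : Fin n → Run m) (a : ℕ) : ℝ :=
  ∑ W ∈ (pairsQ m).powersetCard a,
    (Jchar D W / (n : ℝ) - Jchar (fun σ : Run m => σ) W / (Nat.factorial m : ℝ)) ^ 2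

lemma card_pairsQ (m : ℕ) : (pairsQ m).card = m.choose 2 := by
  have hfib : ∀ b : Fin m, ((pairsQ m).filter (fun p => p.2 = b)).card = (b:ℕ) := by
    intro b
    have : (pairsQ m).filter (fun p => p.2 = b)
        = (Finset.Iio b).map ⟨fun a => (a, b), fun a a' h => by simpa using congrArg Prod.fst h⟩ := by
      ext p
      simp only [pairsQ, Finset.mem_filter, Finset.mem_univ, true_and, Finset.mem_map,
        Finset.mem_Iio, Function.Embedding.coeFn_mk]
      constructor
      · rintro ⟨h1, h2⟩; exact ⟨p.1, by rw [← h2]; exact h1, by rw [← h2]; rfl⟩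
      · rintro ⟨a, ha, rfl⟩; exact ⟨ha, rfl⟩
    rw [this, Finset.card_map, Fin.card_Iio]
  rw [Finset.card_eq_sum_card_fiberwise (f := Prod.snd) (t := Finset.univ)
    (fun p _ => Finset.mem_univ _)]
  simp only [hfib]
  rw [Fin.sum_univ_eq_sum_range (fun i => i) m, Finset.sum_range_id, Nat.choose_two_right]

lemma zab_swap {m : ℕ} (σ : Run m) (p : Fin m × Fin m) (hp : p.1 ≠ p.2) :
    zab (Equiv.swap p.1 p.2 * σ) p = - zab σ p := by
  have h1 : (Equiv.swap p.1 p.2 * σ).symm p.1 = σ.symm p.2 := by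
    simp [Equiv.Perm.mul_def, Equiv.swap_apply_left]
  have h2 : (Equiv.swap p.1 p.2 * σ).symm p.2 = σ.symm p.1 := by
    simp [Equiv.Perm.mul_def, Equiv.swap_apply_right]
  have hne : σ.symm p.1 ≠ σ.symm p.2 := fun h => hp (σ.symm.injective h)
  unfold zab
  rw [h1, h2]
  rcases lt_or_gt_of_ne hne with h | h
  · simp [h, asymm h]
  · simp [h, asymm h]

lemma Jfull_single {m : ℕ} (p : Fin m × Fin m) (hp : p.1 ≠ p.2) :
    ∑ σ : Run m, zab σ p = 0 := by
  have h := Equiv.sum_comp (Equiv.mulLeft (Equiv.swap p.1 p.2)) (fun σ : Run m => zab σ p)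
  simp only [Equiv.coe_mulLeft] at h
  have h2 : ∑ σ : Run m, zab (Equiv.swap p.1 p.2 * σ) p = - ∑ σ : Run m, zab σ p := by
    rw [← Finset.sum_neg_distrib]
    exact Finset.sum_congr rfl fun σ _ => zab_swap σ p hp
  rw [h2] at h
  linarith

lemma zz_eq {m : ℕ} (x y : Run m) (p : Fin m × Fin m) (hp : p.1 ≠ p.2) :
    zab x p * zab y p = 1 - 2 * (if (((x.symm p.1 : ℕ) : ℤ) - ((x.symm p.2 : ℕ) : ℤ)) *
        (((y.symm p.1 : ℕ) : ℤ) - ((y.symm p.2 : ℕ) : ℤ)) < 0 then (1:ℝ) else 0) := by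
  have hx : x.symm p.1 ≠ x.symm p.2 := fun h => hp (x.symm.injective h)
  have hy : y.symm p.1 ≠ y.symm p.2 := fun h => hp (y.symm.injective h)
  set A : ℤ := ((x.symm p.1 : ℕ) : ℤ) - ((x.symm p.2 : ℕ) : ℤ) with hA
  set B : ℤ := ((y.symm p.1 : ℕ) : ℤ) - ((y.symm p.2 : ℕ) : ℤ) with hB
  unfold zab
  rcases lt_or_gt_of_ne hx with h1 | h1 <;> rcases lt_or_gt_of_ne hy with h2 | h2
  · have a1 : A < 0 := by have := Fin.lt_iff_val_lt_val.mp h1; omega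
    have b1 : B < 0 := by have := Fin.lt_iff_val_lt_val.mp h2; omega
    rw [if_pos h1, if_pos h2, if_neg (by intro hlt; nlinarith)]; ring
  · have a1 : A < 0 := by have := Fin.lt_iff_val_lt_val.mp h1; omega
    have b1 : 0 < B := by have := Fin.lt_iff_val_lt_val.mp h2; omega
    rw [if_pos h1, if_neg (asymm h2), if_pos (by nlinarith)]; ring
  · have a1 : 0 < A := by have := Fin.lt_iff_val_lt_val.mp h1; omega
    have b1 : B < 0 := by have := Fin.lt_iff_val_lt_val.mp h2; omega
    rw [if_neg (asymm h1), if_pos h2, if_pos (by nlinarith)]; ring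
  · have a1 : 0 < A := by have := Fin.lt_iff_val_lt_val.mp h1; omega
    have b1 : 0 < B := by have := Fin.lt_iff_val_lt_val.mp h2; omega
    rw [if_neg (asymm h1), if_neg (asymm h2), if_neg (by intro hlt; nlinarith)]; ring

lemma kendall_comm {m : ℕ} (x y : Run m) : kendall x y = kendall y x := by
  unfold kendall
  congr 1
  apply Finset.filter_congr
  intro p _
  rw [mul_comm]

lemma kendall_self {m : ℕ} (x : Run m) : kendall x x = 0 := by
  unfold kendall
  rw [Finset.card_eq_zero, Finset.filter_eq_empty_iff]
  rintro p _ ⟨_, h⟩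
  nlinarith [mul_self_nonneg (((x.symm p.1 : ℕ) : ℤ) - ((x.symm p.2 : ℕ) : ℤ))]

lemma pairsum {m : ℕ} (x y : Run m) :
    ∑ p ∈ pairsQ m, zab x p * zab y p = (m.choose 2 : ℝ) - 2 * (kendall x y : ℝ) := by
  have hcongr : ∀ p ∈ pairsQ m, zab x p * zab y p
      = 1 - 2 * (if (((x.symm p.1 : ℕ) : ℤ) - ((x.symm p.2 : ℕ) : ℤ)) *
          (((y.symm p.1 : ℕ) : ℤ) - ((y.symm p.2 : ℕ) : ℤ)) < 0 then (1:ℝ) else 0) := by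
    intro p hp
    exact zz_eq x y p (ne_of_lt ((Finset.mem_filter.mp hp).2))
  rw [Finset.sum_congr rfl hcongr, Finset.sum_sub_distrib, Finset.sum_const, ← Finset.mul_sum]
  have hb : (∑ p ∈ pairsQ m, (if (((x.symm p.1 : ℕ) : ℤ) - ((x.symm p.2 : ℕ) : ℤ)) *
      (((y.symm p.1 : ℕ) : ℤ) - ((y.symm p.2 : ℕ) : ℤ)) < 0 then (1:ℝ) else 0))
      = (kendall x y : ℝ) := by
    rw [Finset.sum_boole]
    congr 1
    unfold kendall pairsQ
    rw [Finset.filter_filter]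
  rw [hb, card_pairsQ]
  simp

lemma double_sum_kendall {m n : ℕ} (D : Fin n → Run m) :
    ∑ i : Fin n, ∑ j : Fin n, (kendall (D i) (D j) : ℝ)
      = 2 * ∑ p ∈ Finset.univ.filter (fun p : Fin n × Fin n => p.1 < p.2),
          (kendall (D p.1) (D p.2) : ℝ) := by
  have h0 : ∑ i : Fin n, ∑ j : Fin n, (kendall (D i) (D j) : ℝ)
      = ∑ p : Fin n × Fin n, (kendall (D p.1) (D p.2) : ℝ) := by
    rw [← Finset.sum_product', Finset.univ_product_univ]
  rw [h0, ← Finset.sum_filter_add_sum_filter_not Finset.univ (fun p : Fin n × Fin n => p.1 < p.2)]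
  have hsub : Finset.univ.filter (fun p : Fin n × Fin n => p.2 < p.1)
      ⊆ Finset.univ.filter (fun p : Fin n × Fin n => ¬ p.1 < p.2) := by
    intro p hp
    simp only [Finset.mem_filter, Finset.mem_univ, true_and] at *
    exact not_lt_of_gt hp
  have h1 : ∑ p ∈ Finset.univ.filter (fun p : Fin n × Fin n => ¬ p.1 < p.2),
      (kendall (D p.1) (D p.2) : ℝ)
      = ∑ p ∈ Finset.univ.filter (fun p : Fin n × Fin n => p.2 < p.1),
          (kendall (D p.1) (D p.2) : ℝ) := by
    rw [← Finset.sum_subset hsub]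
    intro p hp hnp
    simp only [Finset.mem_filter, Finset.mem_univ, true_and] at hp hnp
    have : p.1 = p.2 := le_antisymm (not_lt.mp hnp) (not_lt.mp hp)
    rw [this, kendall_self]
    simp
  have h2 : ∑ p ∈ Finset.univ.filter (fun p : Fin n × Fin n => p.2 < p.1),
      (kendall (D p.1) (D p.2) : ℝ)
      = ∑ p ∈ Finset.univ.filter (fun p : Fin n × Fin n => p.1 < p.2),
          (kendall (D p.1) (D p.2) : ℝ) := by
    apply Finset.sum_nbij' (fun p => Prod.swap p) (fun p => Prod.swap p) <;>
      intro p hp <;>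
      simp only [Finset.mem_filter, Finset.mem_univ, true_and, Prod.fst_swap, Prod.snd_swap,
        Prod.swap_swap] at *
    · exact hp
    · exact hp
    · exact congrArg _ (kendall_comm (D p.1) (D p.2))
  rw [h1, h2]
  ring

theorem stmt5 {m n : ℕ} (hm : 2 ≤ m) (hn : 2 ≤ n) (D : Fin n → Run m) :
    Cwlp D 1 = (m : ℝ) * ((m : ℝ) - 1) / 2 - (2 * ((n : ℝ) - 1) / (n : ℝ)) * kave D := by
  have hn0 : (n : ℝ) ≠ 0 := by positivity
  have hn1 : (n : ℝ) - 1 ≠ 0 := by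
    have : (2 : ℝ) ≤ (n : ℝ) := by exact_mod_cast hn
    intro h; linarith
  set S : ℝ := ∑ p ∈ Finset.univ.filter (fun p : Fin n × Fin n => p.1 < p.2),
      (kendall (D p.1) (D p.2) : ℝ) with hS
  set q : ℝ := (m.choose 2 : ℝ) with hq
  -- main sum computation
  have key : ∑ p ∈ pairsQ m, (Jchar D {p}) ^ 2 = (n : ℝ)^2 * q - 4 * S := by
    have step1 : ∀ p ∈ pairsQ m, (Jchar D {p}) ^ 2
        = ∑ i : Fin n, ∑ j : Fin n, zab (D i) p * zab (D j) p := by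
      intro p _
      unfold Jchar
      simp only [Finset.prod_singleton]
      rw [sq, Finset.sum_mul_sum]
    rw [Finset.sum_congr rfl step1, Finset.sum_comm]
    have step2 : ∀ i : Fin n, ∑ p ∈ pairsQ m, ∑ j : Fin n, zab (D i) p * zab (D j) p
        = ∑ j : Fin n, (q - 2 * (kendall (D i) (D j) : ℝ)) := by
      intro i
      rw [Finset.sum_comm]
      exact Finset.sum_congr rfl fun j _ => pairsum (D i) (D j)
    rw [Finset.sum_congr rfl fun i _ => step2 i]
    simp only [Finset.sum_sub_distrib, Finset.sum_const, Finset.card_univ, Fintype.card_fin,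
      nsmul_eq_mul, ← Finset.mul_sum]
    rw [double_sum_kendall D]
    ring
  -- rewrite Cwlp
  unfold Cwlp
  rw [Finset.powersetCard_one, Finset.sum_map]
  simp only [Function.Embedding.coeFn_mk]
  have hfull : ∀ p ∈ pairsQ m, Jchar (fun σ : Run m => σ) {p} = 0 := by
    intro p hp
    unfold Jchar
    simp only [Finset.prod_singleton]
    exact Jfull_single p (ne_of_lt ((Finset.mem_filter.mp hp).2))
  have hsum : ∑ p ∈ pairsQ m,
      (Jchar D {p} / (n : ℝ) - Jchar (fun σ : Run m => σ) {p} / (Nat.factorial m : ℝ)) ^ 2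
      = (∑ p ∈ pairsQ m, (Jchar D {p}) ^ 2) / (n : ℝ)^2 := by
    rw [Finset.sum_div]
    refine Finset.sum_congr rfl fun p hp => ?_
    rw [hfull p hp]
    field_simp
    ring
  rw [hsum, key]
  unfold kave
  rw [← hS]
  have hchoose : ((n.choose 2 : ℕ) : ℝ) = (n : ℝ) * ((n : ℝ) - 1) / 2 := Nat.cast_choose_two ℝ n
  have hqval : q = (m : ℝ) * ((m : ℝ) - 1) / 2 := by rw [hq, Nat.cast_choose_two]
  rw [hchoose, hqval]
  field_simp
  ring
end

section
/- For any n-run OofA design D on m components with moment matrix M = XᵀX of its PWO model matrix, tr(M²) = n² { tr(M_full²)/(m!)² + 2 C_1(D) + 2 C_2(D) }, where M_full is the moment matrix of the PWO model matrix of the full design D_full of all m! permutations. -/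
/-- The PWO model matrix of a design: a row `(1, z_ab(x_i) : a < b)` for each run. -/
def pwoX {m : ℕ} {ι : Type} (D : ι → Run m) :
    Matrix ι (Option {p : Fin m × Fin m // p.1 < p.2}) ℝ :=
  fun i c => match c with
    | none => 1
    | some p => zab (D i) p.1

/-!
Write `M_E = X_Eᵀ X_E`. The entries of `M_D / n - M_full / m!` are the centred
`J`-characteristics `J_W(D)/n - J_W(D_full)/m!` of the words `W ⊆ Q` with `|W| ≤ 2`: the empty
word sits on the diagonal and contributes `0`, every word of length 1 or 2 occurs twice.
So the squared entries of this symmetric matrix sum to `2 C_1(D) + 2 C_2(D)`, and expanding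
that sum as a trace leaves the cross term `tr(M_D M_full) = Σ_{x ∈ D} Σ_σ ⟨row x, row σ⟩²`.
Relabelling the components by a permutation preserves every `⟨row x, row y⟩ =
1 + Σ_{a<b} z_ab(x) z_ab(y)`, so the inner sum does not depend on `x`; hence
`tr(M_D M_full) = (n / m!) tr(M_full²)`, which turns the expansion into the identity.
-/

open Finset Matrix

section SymmetricSums

variable {α M : Type*} [LinearOrder α] [Fintype α]

theorem sum_sum_eq_sum_diag_add_two_nsmul_sum_lt [AddCommMonoid M] (f : α → α → M)
    (hf : ∀ a b, f a b = f b a) :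
    ∑ a, ∑ b, f a b = ∑ a, f a a + 2 • ∑ p ∈ univ.filter (fun p : α × α => p.1 < p.2), f p.1 p.2 := by
  have split : f = fun a b =>
      ((if a < b then f a b else 0) + if b < a then f b a else 0) + if a = b then f a a else 0 := by
    ext a b
    rcases lt_trichotomy a b with h | rfl | h
    · simp [h, h.not_gt, h.ne]
    · simp
    · simp [h, h.not_gt, h.ne', hf a b]
  conv_lhs => rw [split]
  simp only [sum_add_distrib, sum_ite_eq, mem_univ, if_true]
  rw [sum_comm (f := fun a b => if b < a then f b a else 0), sum_filter, Fintype.sum_prod_type,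
    two_nsmul]
  abel

theorem sum_lt_comp_perm [AddCancelCommMonoid M] [IsAddTorsionFree M] (f : α → α → M)
    (hf : ∀ a b, f a b = f b a) (τ : Equiv.Perm α) :
    ∑ p ∈ univ.filter (fun p : α × α => p.1 < p.2), f (τ p.1) (τ p.2) =
      ∑ p ∈ univ.filter (fun p : α × α => p.1 < p.2), f p.1 p.2 := by
  have hτ := sum_sum_eq_sum_diag_add_two_nsmul_sum_lt (fun a b => f (τ a) (τ b)) fun a b => hf _ _
  rw [(Equiv.sum_comp τ fun c => ∑ b, f c (τ b)).trans
      (sum_congr rfl fun a _ => Equiv.sum_comp τ (f a)),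
    Equiv.sum_comp τ fun c => f c c, sum_sum_eq_sum_diag_add_two_nsmul_sum_lt f hf] at hτ
  exact (nsmul_right_injective two_ne_zero (add_left_cancel hτ)).symm

end SymmetricSums

theorem sum_offDiag_pair_eq_two_nsmul {α M : Type*} [DecidableEq α] [AddCommMonoid M]
    (s : Finset α) (f : Finset α → M) :
    ∑ z ∈ s.offDiag, f {z.1, z.2} = 2 • ∑ W ∈ s.powersetCard 2, f W := by
  have maps : ∀ z ∈ s.offDiag, ({z.1, z.2} : Finset α) ∈ s.powersetCard 2 := by
    intro z hz
    obtain ⟨h1, h2, hne⟩ := mem_offDiag.1 hz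
    exact mem_powersetCard.2 ⟨insert_subset h1 (singleton_subset_iff.2 h2), card_pair hne⟩
  rw [← sum_fiberwise_of_maps_to maps, smul_sum]
  refine sum_congr rfl fun W hW => ?_
  obtain ⟨hWs, hWc⟩ := mem_powersetCard.1 hW
  have fiber : s.offDiag.filter (fun z => ({z.1, z.2} : Finset α) = W) = W.offDiag := by
    ext z
    simp only [mem_filter, mem_offDiag]
    constructor
    · rintro ⟨⟨-, -, hne⟩, rfl⟩
      simp [hne]
    · rintro ⟨h1, h2, hne⟩
      refine ⟨⟨hWs h1, hWs h2, hne⟩, eq_of_subset_of_card_le ?_ ?_⟩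
      · exact insert_subset h1 (singleton_subset_iff.2 h2)
      · rw [hWc, card_pair hne]
  have pair_eq : ∀ z ∈ W.offDiag, ({z.1, z.2} : Finset α) = W := by
    intro z hz
    rw [← fiber] at hz
    exact (mem_filter.1 hz).2
  rw [fiber, sum_congr rfl fun z hz => congrArg f (pair_eq z hz), sum_const, offDiag_card, hWc]

section TraceSquares

variable {ι κ R : Type*} [Fintype ι] [Fintype κ]

theorem Matrix.trace_mul_transpose_self [CommSemiring R] (A : Matrix ι κ R) :
    trace (A * Aᵀ) = ∑ i, ∑ j, A i j ^ 2 := by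
  simp [trace, mul_apply, sq]

theorem Matrix.IsSymm.trace_mul_self [CommSemiring R] {A : Matrix ι ι R} (hA : A.IsSymm) :
    trace (A * A) = ∑ i, ∑ j, A i j ^ 2 := by
  rw [← trace_mul_transpose_self, hA.eq]

theorem Matrix.trace_gram_mul_gram [CommSemiring R] {ι' : Type*} [Fintype ι']
    (X : Matrix ι κ R) (Y : Matrix ι' κ R) :
    trace (Xᵀ * X * (Yᵀ * Y)) = ∑ i, ∑ j, (X * Yᵀ) i j ^ 2 := by
  rw [← trace_mul_transpose_self, transpose_mul, transpose_transpose, Matrix.mul_assoc,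
    trace_mul_comm]
  simp only [Matrix.mul_assoc]

theorem Matrix.trace_smul_sub_smul_mul_self [CommRing R] (A B : Matrix ι ι R) (a b : R) :
    trace ((a • A - b • B) * (a • A - b • B)) =
      a ^ 2 * trace (A * A) - 2 * a * b * trace (A * B) + b ^ 2 * trace (B * B) := by
  simp only [sub_mul, mul_sub, smul_mul_smul_comm, trace_sub, trace_smul, smul_eq_mul,
    trace_mul_comm B A]
  ring

end TraceSquares

section PWO

variable {m : ℕ} {ι : Type} [Fintype ι]

abbrev PwoPair (m : ℕ) := {p : Fin m × Fin m // p.1 < p.2}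

def pwoRow (x : Run m) : Option (PwoPair m) → ℝ :=
  pwoX (fun σ : Run m => σ) x

def pwoMoment (E : ι → Run m) : Matrix (Option (PwoPair m)) (Option (PwoPair m)) ℝ :=
  (pwoX E)ᵀ * pwoX E

theorem pwoMoment_isSymm (E : ι → Run m) : (pwoMoment E).IsSymm := by
  rw [pwoMoment, IsSymm, transpose_mul, transpose_transpose]

theorem zab_mul_self (x : Run m) (p : Fin m × Fin m) : zab x p * zab x p = 1 := by
  unfold zab
  split_ifs <;> norm_num

theorem zab_swap_s7 (x : Run m) {a b : Fin m} (h : a ≠ b) : zab x (b, a) = -zab x (a, b) := by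
  have hne : x.symm a ≠ x.symm b := x.symm.injective.ne h
  unfold zab
  rcases hne.lt_or_gt with hlt | hlt <;> simp [hlt, hlt.not_gt]

theorem zab_perm_mul (τ x : Run m) (p : Fin m × Fin m) :
    zab (τ * x) p = zab x (τ.symm p.1, τ.symm p.2) :=
  rfl

theorem sum_pwoPair_eq_sum_pairsQ {M : Type*} [AddCommMonoid M] (g : Fin m × Fin m → M) :
    ∑ p : PwoPair m, g p.1 = ∑ a ∈ pairsQ m, g a :=
  (sum_subtype (pairsQ m) (fun a => by simp [pairsQ]) g).symm

theorem pwoRow_dotProduct (x y : Run m) :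
    pwoRow x ⬝ᵥ pwoRow y = 1 + ∑ a ∈ pairsQ m, zab x a * zab y a := by
  rw [dotProduct, Fintype.sum_option, ← sum_pwoPair_eq_sum_pairsQ]
  simp [pwoRow, pwoX]

theorem pwoRow_perm_mul_dotProduct (τ x y : Run m) :
    pwoRow (τ * x) ⬝ᵥ pwoRow (τ * y) = pwoRow x ⬝ᵥ pwoRow y := by
  have symm : ∀ a b : Fin m, zab x (a, b) * zab y (a, b) = zab x (b, a) * zab y (b, a) := by
    intro a b
    rcases eq_or_ne a b with rfl | hab
    · rfl
    · rw [zab_swap_s7 x hab, zab_swap_s7 y hab, neg_mul_neg]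
  simp only [pwoRow_dotProduct, pairsQ, zab_perm_mul]
  rw [sum_lt_comp_perm (fun a b => zab x (a, b) * zab y (a, b)) symm τ.symm]

theorem sum_sq_pwoRow_dotProduct_eq_of_one (x : Run m) :
    ∑ σ : Run m, (pwoRow x ⬝ᵥ pwoRow σ) ^ 2 = ∑ σ : Run m, (pwoRow 1 ⬝ᵥ pwoRow σ) ^ 2 := by
  calc ∑ σ : Run m, (pwoRow x ⬝ᵥ pwoRow σ) ^ 2
      = ∑ σ : Run m, (pwoRow 1 ⬝ᵥ pwoRow (x⁻¹ * σ)) ^ 2 := by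
        simp_rw [← pwoRow_perm_mul_dotProduct x⁻¹ x, inv_mul_cancel]
    _ = ∑ σ : Run m, (pwoRow 1 ⬝ᵥ pwoRow σ) ^ 2 :=
        Fintype.sum_equiv (Equiv.mulLeft x⁻¹) _ _ fun σ => rfl

theorem trace_pwoMoment_mul_pwoMoment_full (E : ι → Run m) :
    trace (pwoMoment E * pwoMoment (fun σ : Run m => σ)) =
      Fintype.card ι * ∑ σ : Run m, (pwoRow 1 ⬝ᵥ pwoRow σ) ^ 2 := by
  have entry : ∀ i σ, (pwoX E * (pwoX fun σ : Run m => σ)ᵀ) i σ = pwoRow (E i) ⬝ᵥ pwoRow σ :=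
    fun _ _ => rfl
  simp only [pwoMoment, trace_gram_mul_gram, entry, sum_sq_pwoRow_dotProduct_eq_of_one, sum_const,
    card_univ, nsmul_eq_mul]

theorem pwoMoment_none_none (E : ι → Run m) : pwoMoment E none none = Fintype.card ι := by
  simp [pwoMoment, mul_apply, pwoX]

theorem pwoMoment_none_some (E : ι → Run m) (p : PwoPair m) :
    pwoMoment E none (some p) = Jchar E {p.1} := by
  simp [pwoMoment, mul_apply, pwoX, Jchar]

theorem pwoMoment_some_none (E : ι → Run m) (p : PwoPair m) :
    pwoMoment E (some p) none = Jchar E {p.1} := by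
  simp [pwoMoment, mul_apply, pwoX, Jchar]

theorem pwoMoment_some_some (E : ι → Run m) (p p' : PwoPair m) :
    pwoMoment E (some p) (some p') =
      if p = p' then (Fintype.card ι : ℝ) else Jchar E {p.1, p'.1} := by
  split_ifs with h
  · simp [h, pwoMoment, mul_apply, pwoX, zab_mul_self]
  · simp [pwoMoment, mul_apply, pwoX, Jchar, prod_pair (Subtype.val_injective.ne h)]

end PWO

section Wordlength

variable {m n : ℕ}

noncomputable def centredJchar (D : Fin n → Run m) (W : Finset (Fin m × Fin m)) : ℝ :=
  Jchar D W / n - Jchar (fun σ : Run m => σ) W / (Nat.factorial m : ℝ)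

noncomputable def centredMoment (D : Fin n → Run m) :
    Matrix (Option (PwoPair m)) (Option (PwoPair m)) ℝ :=
  (n : ℝ)⁻¹ • pwoMoment D - (Nat.factorial m : ℝ)⁻¹ • pwoMoment fun σ : Run m => σ

theorem centredMoment_isSymm (D : Fin n → Run m) : (centredMoment D).IsSymm :=
  ((pwoMoment_isSymm D).smul _).sub ((pwoMoment_isSymm _).smul _)

theorem centredMoment_apply (D : Fin n → Run m) (c c' : Option (PwoPair m)) :
    centredMoment D c c' = (n : ℝ)⁻¹ * pwoMoment D c c' -
      (Nat.factorial m : ℝ)⁻¹ * pwoMoment (fun σ : Run m => σ) c c' :=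
  rfl

theorem centredMoment_eq_zero_of_eq_card (hn : n ≠ 0) (D : Fin n → Run m) {c c' : Option (PwoPair m)}
    (hD : pwoMoment D c c' = n)
    (hfull : pwoMoment (fun σ : Run m => σ) c c' = Fintype.card (Run m)) :
    centredMoment D c c' = 0 := by
  rw [centredMoment_apply, hD, hfull, Fintype.card_perm, Fintype.card_fin,
    inv_mul_cancel₀ (Nat.cast_ne_zero.2 hn),
    inv_mul_cancel₀ (Nat.cast_ne_zero.2 (Nat.factorial_ne_zero m)), sub_self]

theorem centredMoment_none_some (D : Fin n → Run m) (p : PwoPair m) :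
    centredMoment D none (some p) = centredJchar D {p.1} := by
  rw [centredMoment_apply, pwoMoment_none_some, pwoMoment_none_some, centredJchar]
  ring

theorem centredMoment_some_none (D : Fin n → Run m) (p : PwoPair m) :
    centredMoment D (some p) none = centredJchar D {p.1} := by
  rw [centredMoment_apply, pwoMoment_some_none, pwoMoment_some_none, centredJchar]
  ring

theorem centredMoment_some_some (hn : n ≠ 0) (D : Fin n → Run m) (p p' : PwoPair m) :
    centredMoment D (some p) (some p') =
      if p.1 = p'.1 then 0 else centredJchar D {p.1, p'.1} := by
  split_ifs with h
  · have hp : p = p' := Subtype.ext h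
    refine centredMoment_eq_zero_of_eq_card hn D ?_ ?_ <;>
      rw [pwoMoment_some_some, if_pos hp]
    exact_mod_cast Fintype.card_fin n
  · have hp : p ≠ p' := fun hp => h (congrArg Subtype.val hp)
    rw [centredMoment_apply, pwoMoment_some_some, pwoMoment_some_some, if_neg hp, if_neg hp,
      centredJchar]
    ring

theorem Cwlp_one_eq (D : Fin n → Run m) :
    Cwlp D 1 = ∑ a ∈ pairsQ m, centredJchar D {a} ^ 2 := by
  rw [Cwlp, powersetCard_one, sum_map]
  rfl

theorem two_mul_Cwlp_two_eq (D : Fin n → Run m) :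
    2 * Cwlp D 2 = ∑ z ∈ (pairsQ m).offDiag, centredJchar D {z.1, z.2} ^ 2 := by
  rw [sum_offDiag_pair_eq_two_nsmul (pairsQ m) fun W => centredJchar D W ^ 2, nsmul_eq_mul,
    Nat.cast_ofNat]
  rfl

theorem sum_sq_centredMoment (hn : n ≠ 0) (D : Fin n → Run m) :
    ∑ c, ∑ c', centredMoment D c c' ^ 2 = 2 * Cwlp D 1 + 2 * Cwlp D 2 := by
  have none_none : centredMoment D none none = 0 :=
    centredMoment_eq_zero_of_eq_card hn D (by rw [pwoMoment_none_none, Fintype.card_fin])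
      (pwoMoment_none_none _)
  have off_diagonal : ∑ p : PwoPair m, ∑ p' : PwoPair m,
      (if p.1 = p'.1 then 0 else centredJchar D {p.1, p'.1}) ^ 2 = 2 * Cwlp D 2 := by
    have offDiag_eq : (pairsQ m).offDiag = (pairsQ m ×ˢ pairsQ m).filter fun z => z.1 ≠ z.2 := by
      ext z
      simp [mem_offDiag, and_assoc]
    rw [two_mul_Cwlp_two_eq, offDiag_eq, sum_filter, sum_product, ← sum_pwoPair_eq_sum_pairsQ]
    refine sum_congr rfl fun p _ => ?_
    rw [← sum_pwoPair_eq_sum_pairsQ]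
    simp only [ite_pow, ne_eq, ite_not, zero_pow two_ne_zero]
  simp only [Fintype.sum_option, none_none, centredMoment_none_some, centredMoment_some_none,
    centredMoment_some_some hn, sum_add_distrib, off_diagonal,
    sum_pwoPair_eq_sum_pairsQ fun a => centredJchar D {a} ^ 2, Cwlp_one_eq]
  ring

end Wordlength

open Matrix in
theorem stmt7_general {m n : ℕ} (D : Fin n → Run m) :
    Matrix.trace ((pwoX D)ᵀ * pwoX D * ((pwoX D)ᵀ * pwoX D)) =
      (n : ℝ) ^ 2 *
        (Matrix.trace ((pwoX (fun σ : Run m => σ))ᵀ * pwoX (fun σ : Run m => σ) *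
            ((pwoX (fun σ : Run m => σ))ᵀ * pwoX (fun σ : Run m => σ))) /
            (Nat.factorial m : ℝ) ^ 2 +
          2 * Cwlp D 1 + 2 * Cwlp D 2) := by
  change trace (pwoMoment D * pwoMoment D) = (n : ℝ) ^ 2 *
    (trace (pwoMoment (fun σ : Run m => σ) * pwoMoment fun σ : Run m => σ) /
      (Nat.factorial m : ℝ) ^ 2 + 2 * Cwlp D 1 + 2 * Cwlp D 2)
  rcases eq_or_ne n 0 with rfl | hn
  · simp [pwoMoment, trace, mul_apply]
  have cross := trace_pwoMoment_mul_pwoMoment_full D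
  have full := trace_pwoMoment_mul_pwoMoment_full fun σ : Run m => σ
  rw [Fintype.card_fin] at cross
  rw [Fintype.card_perm, Fintype.card_fin] at full
  have centred := ((centredMoment_isSymm D).trace_mul_self).trans (sum_sq_centredMoment hn D)
  rw [centredMoment, trace_smul_sub_smul_mul_self, cross, full] at centred
  have hfac : (Nat.factorial m : ℝ) ≠ 0 := Nat.cast_ne_zero.2 (Nat.factorial_ne_zero m)
  rw [full, add_assoc, ← centred]
  field_simp
  ring

open Matrix in
theorem stmt7 {m n : ℕ} (hm : 2 ≤ m) (D : Fin n → Run m) :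
    Matrix.trace ((pwoX D)ᵀ * pwoX D * ((pwoX D)ᵀ * pwoX D)) =
      (n : ℝ) ^ 2 *
        (Matrix.trace ((pwoX (fun σ : Run m => σ))ᵀ * pwoX (fun σ : Run m => σ) *
            ((pwoX (fun σ : Run m => σ))ᵀ * pwoX (fun σ : Run m => σ))) /
            (Nat.factorial m : ℝ) ^ 2 +
          2 * Cwlp D 1 + 2 * Cwlp D 2) :=
  stmt7_general D
end
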